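/- For the hypercube graph Q_n with n ≥ 2, MEG(Q_n) = 2^n; i.e., the only MEG-set of Q_n is its entire vertex set. -/

import Mathlib

open SimpleGraph

/-- Two vertices `x` and `y` monitor an edge `e` in `G`: there is a shortest path between
them, and `e` lies on every shortest path between `x` and `y`. -/
def Monitors {V : Type*} (G : SimpleGraph V) (x y : V) (e : Sym2 V) : Prop :=
  (∃ p : G.Walk x y, p.IsPath ∧ p.length = G.dist x y) ∧
    ∀ p : G.Walk x y, p.IsPath → p.length = G.dist x y → e ∈ p.edges

/-- `S` is a monitoring edge-geodetic set of `G`. -/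
def IsMEGSet {V : Type*} (G : SimpleGraph V) (S : Set V) : Prop :=
  ∀ e ∈ G.edgeSet, ∃ x ∈ S, ∃ y ∈ S, Monitors G x y e

/-- The minimum size of a monitoring edge-geodetic set of `G`. -/
noncomputable def megNum {V : Type*} (G : SimpleGraph V) : ℕ :=
  sInf {n | ∃ S : Set V, IsMEGSet G S ∧ S.ncard = n}

/-- The set of leaves (degree-1 vertices) of `G`. -/
def leaves {V : Type*} (G : SimpleGraph V) : Set V :=
  {v | (G.neighborSet v).ncard = 1}


/-- The hypercube graph of dimension `n`: vertices are binary strings of length `n`,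
adjacent iff they differ in exactly one bit. -/
def hypercubeGraph (n : ℕ) : SimpleGraph (Fin n → Bool) where
  Adj x y := ∃! i, x i ≠ y i
  symm := by
    constructor
    rintro x y ⟨i, hi, hu⟩
    exact ⟨i, hi.symm, fun j hj => hu j hj.symm⟩
  loopless := by
    constructor
    rintro x ⟨i, hi, -⟩
    exact hi rfl

/-!
If `v` is an interior vertex of a shortest `x`–`y` path `… a v b …` and `a ≠ b` have a common
neighbour `z ≠ v`, then rerouting through `z` gives a shortest `x`–`y` path avoiding `v`. Hence an
edge at such a vertex is monitored only by pairs containing it. In `Q_n` the neighbours `x + e_i`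
and `x + e_j` of `x` also share `x + e_i + e_j`, so every vertex lies in every MEG-set; conversely
the whole vertex set is one, since the endpoints of an edge monitor it.
-/

namespace SimpleGraph

variable {V : Type*} {G : SimpleGraph V}

lemma Walk.exists_eq_append_cons_cons {x y v : V} (p : G.Walk x y) (hv : v ∈ p.support)
    (hx : v ≠ x) (hy : v ≠ y) :
    ∃ (a b : V) (ha : G.Adj a v) (hb : G.Adj v b) (q : G.Walk x a) (r : G.Walk b y),
      p = q.append (cons ha (cons hb r)) := by
  classical
  obtain ⟨a, hva, q', hq'⟩ := Walk.exists_eq_cons_of_ne hx (p.takeUntil v hv).reverse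
  obtain ⟨b, hvb, r, hr⟩ := Walk.exists_eq_cons_of_ne hy (p.dropUntil v hv)
  refine ⟨a, b, hva.symm, hvb, q'.reverse, r, ?_⟩
  rw [← p.take_spec hv, hr, ← (p.takeUntil v hv).reverse_reverse, hq', Walk.reverse_cons,
    ← Walk.append_assoc, Walk.cons_append, Walk.nil_append]

def IsSquareVertex (G : SimpleGraph V) (v : V) : Prop :=
  ∀ ⦃a b : V⦄, G.Adj a v → G.Adj v b → a ≠ b → ∃ z ≠ v, G.Adj a z ∧ G.Adj z b

lemma monitors_of_adj {x y : V} (h : G.Adj x y) : Monitors G x y s(x, y) := by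
  have hdist : G.dist x y = 1 := dist_eq_one_iff_adj.2 h
  refine ⟨⟨h.toWalk, h.isPath_toWalk, by simp [hdist]⟩, fun p _ hp => ?_⟩
  rw [hdist] at hp
  cases p with
  | nil => simp at hp
  | cons _ q =>
    cases q with
    | nil => simp
    | cons => simp at hp

lemma isMEGSet_univ (G : SimpleGraph V) : IsMEGSet G Set.univ := by
  rintro ⟨x, y⟩ h
  exact ⟨x, trivial, y, trivial, monitors_of_adj h⟩

lemma megNum_eq_card_of_forall_eq_univ (h : ∀ S, IsMEGSet G S → S = Set.univ) :
    megNum G = Nat.card V := by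
  have : {n | ∃ S : Set V, IsMEGSet G S ∧ S.ncard = n} = {Nat.card V} := by
    ext n
    constructor
    · rintro ⟨S, hS, rfl⟩
      rw [h S hS, Set.ncard_univ, Set.mem_singleton_iff]
    · rintro rfl
      exact ⟨Set.univ, isMEGSet_univ G, Set.ncard_univ V⟩
  rw [megNum, this, csInf_singleton]

lemma Monitors.eq_or_eq_of_isSquareVertex {x y v : V} {e : Sym2 V} (h : Monitors G x y e)
    (hv : G.IsSquareVertex v) (hve : v ∈ e) : v = x ∨ v = y := by
  by_contra! hxy
  obtain ⟨⟨p, hp, hpd⟩, hmon⟩ := h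
  obtain ⟨a, b, ha, hb, q, r, rfl⟩ := p.exists_eq_append_cons_cons
    (p.mem_support_of_mem_edges (hmon p hp hpd) hve) hxy.1 hxy.2
  have hlen : (q.append (Walk.cons ha (Walk.cons hb r))).length = q.length + r.length + 2 := by
    simp only [Walk.length_append, Walk.length_cons]; omega
  have hv_off : v ∉ q.support ∧ v ∉ r.support := by
    have hnodup := hp.support_nodup
    simp only [Walk.support_append, Walk.support_cons, List.tail_cons] at hnodup
    rw [List.nodup_append] at hnodup
    exact ⟨fun h => hnodup.2.2 v h v (by simp) rfl, (List.nodup_cons.1 hnodup.2.1).1⟩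
  obtain rfl | hab := eq_or_ne a b
  · have hshortcut := dist_le (q.append r)
    rw [Walk.length_append] at hshortcut
    omega
  obtain ⟨z, hzv, haz, hzb⟩ := hv ha hb hab
  set p' := q.append (Walk.cons haz (Walk.cons hzb r))
  have hp'd : p'.length = G.dist x y := by
    simp only [p', Walk.length_append, Walk.length_cons]; omega
  have hvp' := p'.mem_support_of_mem_edges (hmon p' (p'.isPath_of_length_eq_dist hp'd) hp'd) hve
  simp only [p', Walk.support_append, Walk.support_cons, List.tail_cons, List.mem_append,
    List.mem_cons] at hvp'
  rcases hvp' with h | rfl | h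
  · exact hv_off.1 h
  · exact hzv rfl
  · exact hv_off.2 h

lemma IsMEGSet.mem_of_isSquareVertex {S : Set V} (hS : IsMEGSet G S) {u v : V} (huv : G.Adj u v)
    (hv : G.IsSquareVertex v) : v ∈ S := by
  obtain ⟨x, hx, y, hy, hmon⟩ := hS s(u, v) huv
  rcases hmon.eq_or_eq_of_isSquareVertex hv (Sym2.mem_mk_right u v) with rfl | rfl
  · exact hx
  · exact hy

end SimpleGraph

section Hypercube

variable {n : ℕ}

lemma hypercubeGraph_adj_update (x : Fin n → Bool) (i : Fin n) :
    (hypercubeGraph n).Adj x (Function.update x i (!x i)) := by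
  refine ⟨i, by simp, fun j hj => ?_⟩
  by_contra hji
  exact hj (Function.update_of_ne hji _ _).symm

lemma hypercubeGraph_adj_iff {x y : Fin n → Bool} :
    (hypercubeGraph n).Adj x y ↔ ∃ i, y = Function.update x i (!x i) := by
  refine ⟨fun ⟨i, hi, hu⟩ => ⟨i, funext fun j => ?_⟩,
    fun ⟨i, hy⟩ => hy ▸ hypercubeGraph_adj_update x i⟩
  obtain rfl | hji := eq_or_ne j i
  · simpa [eq_comm, Bool.eq_not_iff] using hi
  · rw [Function.update_of_ne hji]
    by_contra h
    exact hji (hu j (Ne.symm h))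

lemma hypercubeGraph_isSquareVertex (x : Fin n → Bool) : (hypercubeGraph n).IsSquareVertex x := by
  intro a b ha hb hab
  obtain ⟨i, rfl⟩ := hypercubeGraph_adj_iff.1 ha.symm
  obtain ⟨j, rfl⟩ := hypercubeGraph_adj_iff.1 hb
  have hij : i ≠ j := by rintro rfl; exact hab rfl
  refine ⟨Function.update (Function.update x i (!x i)) j (!x j), fun h => ?_, ?_, ?_⟩
  · simpa [Function.update_of_ne hij] using congrFun h i
  · convert hypercubeGraph_adj_update (Function.update x i (!x i)) j using 3
    rw [Function.update_of_ne hij.symm]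
  · convert (hypercubeGraph_adj_update (Function.update x j (!x j)) i).symm using 1
    rw [Function.update_of_ne hij, Function.update_comm hij]

end Hypercube

theorem hypercube_MEG (n : ℕ) (hn : 2 ≤ n) :
    megNum (hypercubeGraph n) = 2 ^ n ∧
      ∀ S : Set (Fin n → Bool), IsMEGSet (hypercubeGraph n) S → S = Set.univ := by
  have hunique : ∀ S, IsMEGSet (hypercubeGraph n) S → S = Set.univ := fun S hS =>
    Set.eq_univ_of_forall fun v => hS.mem_of_isSquareVertex
      (hypercubeGraph_adj_update v ⟨0, by omega⟩).symm (hypercubeGraph_isSquareVertex v)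
  refine ⟨?_, hunique⟩
  rw [megNum_eq_card_of_forall_eq_univ hunique, Nat.card_eq_fintype_card, Fintype.card_fun,
    Fintype.card_bool, Fintype.card_fin]
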